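/- Let X be the half-open interval [0,1) pointed at 0 and Y any non-degenerate real interval containing its basepoint 0 (e.g. Y = [0,1] or Y = [0,1)). Then the basepoint of the smash product X ∧ Y has no compact neighbourhood; in particular X ∧ Y is not locally compact. -/

import Mathlib

open Topology

section SmashDefs

variable {X Y : Type*} [TopologicalSpace X] [TopologicalSpace Y]

/-- The relation on `X × Y` collapsing the wedge `X × {y₀} ∪ {x₀} × Y` to a point. -/
def smashRel (x₀ : X) (y₀ : Y) : X × Y → X × Y → Prop :=
  fun p q => p = q ∨ ((p.1 = x₀ ∨ p.2 = y₀) ∧ (q.1 = x₀ ∨ q.2 = y₀))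

/-- The smash product `X ∧ Y` of pointed spaces, as the quotient `(X × Y)/(X ∨ Y)`
collapsing the wedge to a point, with the quotient topology. -/
def Smash (x₀ : X) (y₀ : Y) : Type _ := Quot (smashRel x₀ y₀)

instance (x₀ : X) (y₀ : Y) : TopologicalSpace (Smash x₀ y₀) :=
  inferInstanceAs (TopologicalSpace (Quot _))

/-- Canonical projection `η : X × Y → X ∧ Y`. -/
def Smash.mk (x₀ : X) (y₀ : Y) (p : X × Y) : Smash x₀ y₀ := Quot.mk _ p

/-- Basepoint of the smash product. -/
def Smash.pt (x₀ : X) (y₀ : Y) : Smash x₀ y₀ := Smash.mk x₀ y₀ (x₀, y₀)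

end SmashDefs

/-- `[0,1)` pointed at `0`. -/
def Ico01pt : Set.Ico (0:ℝ) 1 := ⟨0, by constructor <;> norm_num⟩

/-!
Inside any neighbourhood `K` of the basepoint, pick points `[(xₙ, yₙ)]` with `xₙ → 1` in `[0,1)`
and `yₙ ≠ 0`. Since `xₙ` escapes every compact subset of `[0,1)`, the points `(xₙ, yₙ)` form a
locally finite family off the wedge, so every subset of `{[(xₙ, yₙ)]}` has a saturated closed
preimage and is closed in `X ∧ Y`. An infinite closed discrete subset cannot lie in a compact set.
-/

open Filter Set Function

section LocallyFinite

variable {Z ι : Type*} [TopologicalSpace Z]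

theorem IsCompact.finite_of_forall_subset_isClosed {K S : Set Z} (hK : IsCompact K)
    (hSK : S ⊆ K) (hS : ∀ t ⊆ S, IsClosed t) : S.Finite :=
  (hK.of_isClosed_subset (hS S subset_rfl) hSK).finite <|
    isDiscrete_iff_forall_mem_exists_isClosed.mpr fun t ht => ⟨t, hS t ht, inter_eq_left.mpr ht⟩

theorem LocallyFinite.isClosed_of_subset_range [T1Space Z] {g : ι → Z}
    (hg : LocallyFinite fun i => ({g i} : Set Z)) {t : Set Z} (ht : t ⊆ range g) :
    IsClosed t := by
  have ht_eq : t = ⋃ i, {g i} ∩ t := by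
    ext z
    simp only [mem_iUnion, mem_inter_iff, mem_singleton_iff]
    exact ⟨fun hz => (ht hz).imp fun i hi => ⟨hi.symm, hz⟩, fun ⟨_, _, hz⟩ => hz⟩
  rw [ht_eq]
  exact (hg.subset fun i => inter_subset_left).isClosed_iUnion fun i =>
    (subsingleton_singleton.anti inter_subset_left).isClosed

theorem locallyFinite_singleton_of_tendsto {α : Type*} [LinearOrder α] [DenselyOrdered α]
    [TopologicalSpace α] [OrderTopology α] {φ : Z → α} (hφ : Continuous φ) {c : α}
    (hlt : ∀ z, φ z < c) {g : ι → Z} (hg : Tendsto (φ ∘ g) cofinite (𝓝 c)) :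
    LocallyFinite fun i => ({g i} : Set Z) := by
  intro z
  obtain ⟨b, hzb, hbc⟩ := exists_between (hlt z)
  refine ⟨φ ⁻¹' Iio b, (isOpen_Iio.preimage hφ).mem_nhds hzb, ?_⟩
  refine (eventually_cofinite.mp (hg.eventually (lt_mem_nhds hbc))).subset ?_
  rintro i ⟨_, rfl, hi⟩
  exact not_lt.mpr (le_of_lt hi)

end LocallyFinite

section SmashLemmas

variable {X Y : Type*} {x₀ : X} {y₀ : Y}

theorem equivalence_smashRel : Equivalence (smashRel x₀ y₀) where
  refl _ := Or.inl rfl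
  symm := by
    rintro p q (rfl | ⟨hp, hq⟩)
    exacts [Or.inl rfl, Or.inr ⟨hq, hp⟩]
  trans := by
    rintro p q r (rfl | h₁) h₂
    · exact h₂
    rcases h₂ with rfl | h₂
    exacts [Or.inr h₁, Or.inr ⟨h₁.1, h₂.2⟩]

namespace Smash

def wedge (x₀ : X) (y₀ : Y) : Set (X × Y) := {p | p.1 = x₀ ∨ p.2 = y₀}

theorem mk_eq_mk_iff {p q : X × Y} : mk x₀ y₀ p = mk x₀ y₀ q ↔ smashRel x₀ y₀ p q :=
  ⟨fun h => equivalence_smashRel.eqvGen_iff.mp (Quot.eqvGen_exact h), Quot.sound⟩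

theorem mk_eq_pt {p : X × Y} (hp : p ∈ wedge x₀ y₀) : mk x₀ y₀ p = pt x₀ y₀ :=
  Quot.sound (Or.inr ⟨hp, Or.inl rfl⟩)

theorem mk_eq_mk_iff_of_notMem_wedge {p q : X × Y} (hq : q ∉ wedge x₀ y₀) :
    mk x₀ y₀ p = mk x₀ y₀ q ↔ p = q :=
  mk_eq_mk_iff.trans ⟨fun h => h.resolve_right fun h => hq h.2, Or.inl⟩

theorem injOn_mk : InjOn (mk x₀ y₀) (wedge x₀ y₀)ᶜ := fun _ _ _ hq h =>
  (mk_eq_mk_iff_of_notMem_wedge hq).mp h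

theorem preimage_image_mk {S : Set (X × Y)} (hS : S ⊆ (wedge x₀ y₀)ᶜ) :
    mk x₀ y₀ ⁻¹' (mk x₀ y₀ '' S) = S := by
  refine subset_antisymm ?_ (subset_preimage_image _ _)
  rintro p ⟨q, hq, hpq⟩
  rwa [(mk_eq_mk_iff_of_notMem_wedge (hS hq)).mp hpq.symm]

variable [TopologicalSpace X] [TopologicalSpace Y]

theorem isQuotientMap_mk : IsQuotientMap (mk x₀ y₀) := isQuotientMap_quot_mk

theorem isClosed_image_mk {S : Set (X × Y)} (hS : IsClosed S) (hSw : S ⊆ (wedge x₀ y₀)ᶜ) :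
    IsClosed (mk x₀ y₀ '' S) := by
  rwa [← isQuotientMap_mk.isClosed_preimage, preimage_image_mk hSw]

theorem not_isCompact_of_mem_nhds_pt [T1Space X] [T1Space Y] [(𝓝[≠] y₀).NeBot] {g : ℕ → X}
    (hg_inj : Injective g) (hg : ∀ n, g n ≠ x₀) (hgf : LocallyFinite fun n => ({g n} : Set X))
    {K : Set (Smash x₀ y₀)} (hK : K ∈ 𝓝 (pt x₀ y₀)) : ¬ IsCompact K := by
  have hslice : ∀ x, {y | mk x₀ y₀ (x, y) ∈ K} ∈ 𝓝 y₀ := fun x =>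
    (isQuotientMap_mk.continuous.comp (Continuous.prodMk_right x)).continuousAt.preimage_mem_nhds
      (by rwa [Function.comp_apply, mk_eq_pt (p := (x, y₀)) (Or.inr rfl)])
  choose y hy using fun n =>
    Filter.nonempty_of_mem (Filter.inter_mem (nhdsWithin_le_nhds (hslice (g n)))
      (self_mem_nhdsWithin (s := {y₀}ᶜ)))
  have hyK n : mk x₀ y₀ (g n, y n) ∈ K := (hy n).1
  set p : ℕ → X × Y := fun n => (g n, y n)
  have hp_wedge : range p ⊆ (wedge x₀ y₀)ᶜ := by
    rintro _ ⟨n, rfl⟩ (h | h)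
    exacts [hg n h, (hy n).2 h]
  have hpf : LocallyFinite fun n => ({p n} : Set (X × Y)) :=
    (hgf.preimage_continuous continuous_fst).subset fun n => by simp [p]
  have hclosed : ∀ t ⊆ mk x₀ y₀ '' range p, IsClosed t := by
    intro t ht
    rw [← inter_eq_right.mpr ht, ← image_inter_preimage]
    exact isClosed_image_mk (hpf.isClosed_of_subset_range inter_subset_left)
      (inter_subset_left.trans hp_wedge)
  have hinj : Injective (mk x₀ y₀ ∘ p) := fun m n h =>
    hg_inj (congrArg Prod.fst (injOn_mk (hp_wedge ⟨m, rfl⟩) (hp_wedge ⟨n, rfl⟩) h))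
  intro hKc
  refine infinite_range_of_injective hinj ?_
  rw [range_comp]
  exact hKc.finite_of_forall_subset_isClosed (by rintro _ ⟨_, ⟨n, rfl⟩, rfl⟩; exact hyK n) hclosed

end Smash

end SmashLemmas

theorem exists_injective_locallyFinite_pos_Ico_zero_one :
    ∃ g : ℕ → Ico (0:ℝ) 1, Injective g ∧ (∀ n, 0 < (g n : ℝ)) ∧
      LocallyFinite fun n => ({g n} : Set (Ico (0:ℝ) 1)) := by
  have hpow : ∀ n : ℕ, 0 < (2⁻¹ : ℝ) ^ (n + 1) ∧ (2⁻¹ : ℝ) ^ (n + 1) < 1 := fun n =>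
    ⟨by positivity, pow_lt_one₀ (by norm_num) (by norm_num) n.succ_ne_zero⟩
  let g : ℕ → Ico (0:ℝ) 1 := fun n => ⟨1 - 2⁻¹ ^ (n + 1), by linarith [hpow n], by linarith [hpow n]⟩
  have hg_tendsto : Tendsto (Subtype.val ∘ g) cofinite (𝓝 1) := by
    rw [Nat.cofinite_eq_atTop]
    have := ((tendsto_pow_atTop_nhds_zero_of_lt_one (r := (2⁻¹ : ℝ)) (by norm_num)
      (by norm_num)).comp (tendsto_add_atTop_nat 1)).const_sub 1
    rwa [sub_zero] at this
  refine ⟨g, fun m n h => ?_, fun n => show 0 < 1 - _ by linarith [hpow n],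
    locallyFinite_singleton_of_tendsto continuous_subtype_val (fun x => x.2.2) hg_tendsto⟩
  simpa using pow_right_injective₀ (by norm_num : (0:ℝ) < 2⁻¹) (by norm_num)
    (sub_right_injective (congrArg Subtype.val h))

/-- Let `X = [0,1)` pointed at `0`, and `Y` any non-degenerate real interval containing
its basepoint `0`. Then the basepoint of `X ∧ Y` has no compact neighbourhood; in
particular `X ∧ Y` is not locally compact. -/
theorem smash_Ico_no_compact_nhd (Y : Set ℝ) (hY : Y.OrdConnected) (h0 : (0:ℝ) ∈ Y)
    (hnt : Y.Nontrivial) :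
    ∀ K : Set (Smash Ico01pt (⟨0, h0⟩ : Y)),
      K ∈ 𝓝 (Smash.pt Ico01pt (⟨0, h0⟩ : Y)) → ¬ IsCompact K := by
  intro K hK
  have : Nontrivial Y := nontrivial_coe_sort.mpr hnt
  have : ConnectedSpace Y := isConnected_iff_connectedSpace.mp ⟨⟨0, h0⟩, hY.isPreconnected⟩
  obtain ⟨g, hg_inj, hg_pos, hg_lf⟩ := exists_injective_locallyFinite_pos_Ico_zero_one
  exact Smash.not_isCompact_of_mem_nhds_pt hg_inj
    (fun n h => (hg_pos n).ne' (congrArg Subtype.val h)) hg_lf hK
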